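/- arXiv:1103.4052 — 11 statements merged into one kernel-verified Lean document; each statement's English description precedes it below -/
import Mathlib

section
/- The set SDC(G,M) of semi-direct complements of G in M ⋊ G, equipped with the operation H₁ + H₂ = {(h₁+h₂, g) | (h₁,g) ∈ H₁, (h₂,g) ∈ H₂}, forms an abelian group whose identity element is the subgroup {(0,g) | g ∈ G}. -/
/-- The set of semi-direct complements of `G` in `M ⋊ G`: subgroups on which the
canonical projection restricts to an isomorphism onto `G`. -/
def SDC (M G : Type*) [CommGroup M] [Group G] (φ : G →* MulAut M) :=
  {H : Subgroup (M ⋊[φ] G) // Function.Bijective fun h : H => ((h : M ⋊[φ] G).right : G)}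

namespace SDCAux

variable {M G : Type*} [CommGroup M] [Group G] (φ : G →* MulAut M)

def IsCocycle (f : G → M) : Prop := ∀ g₁ g₂, f (g₁ * g₂) = f g₁ * φ g₁ (f g₂)

variable {φ}

lemma IsCocycle.one_eq {f : G → M} (hf : IsCocycle φ f) : f 1 = 1 := by
  have := hf 1 1
  rw [one_mul, _root_.map_one φ, MulAut.one_apply] at this
  exact (left_eq_mul.mp this)

lemma IsCocycle.inv_eq {f : G → M} (hf : IsCocycle φ f) (g : G) :
    f g⁻¹ = φ g⁻¹ (f g)⁻¹ := by
  have h := hf g g⁻¹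
  rw [mul_inv_cancel, hf.one_eq] at h
  have : φ g (f g⁻¹) = (f g)⁻¹ := by
    rw [eq_inv_iff_mul_eq_one, mul_comm]; exact h.symm
  calc f g⁻¹ = φ g⁻¹ (φ g (f g⁻¹)) := by
        rw [← MulAut.mul_apply, ← map_mul, inv_mul_cancel, map_one, MulAut.one_apply]
    _ = φ g⁻¹ (f g)⁻¹ := by rw [this]

def toSub (f : G → M) (hf : IsCocycle φ f) : Subgroup (M ⋊[φ] G) where
  carrier := {x | x.left = f x.right}
  mul_mem' := by
    intro a b ha hb
    simp only [Set.mem_setOf_eq, SemidirectProduct.mul_left, SemidirectProduct.mul_right] at *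
    rw [ha, hb, hf]
  one_mem' := by
    simp only [Set.mem_setOf_eq, SemidirectProduct.one_left, SemidirectProduct.one_right]
    exact hf.one_eq.symm
  inv_mem' := by
    intro a ha
    simp only [Set.mem_setOf_eq, SemidirectProduct.inv_left, SemidirectProduct.inv_right] at *
    rw [ha, hf.inv_eq]

lemma toSub_bij (f : G → M) (hf : IsCocycle φ f) :
    Function.Bijective fun h : toSub f hf => ((h : M ⋊[φ] G).right : G) := by
  constructor
  · rintro ⟨a, ha⟩ ⟨b, hb⟩ h
    simp only at h
    apply Subtype.ext
    apply SemidirectProduct.ext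
    · rw [ha, hb, h]
    · exact h
  · intro g
    exact ⟨⟨⟨f g, g⟩, rfl⟩, rfl⟩

def mkSDC (f : G → M) (hf : IsCocycle φ f) : SDC M G φ := ⟨toSub f hf, toSub_bij f hf⟩

noncomputable def fH (H : SDC M G φ) : G → M :=
  fun g => (((Equiv.ofBijective _ H.2).symm g : H.1) : M ⋊[φ] G).left

lemma fH_spec (H : SDC M G φ) (g : G) : (⟨fH H g, g⟩ : M ⋊[φ] G) ∈ H.1 := by
  have hx : (((Equiv.ofBijective _ H.2).symm g : H.1) : M ⋊[φ] G).right = g :=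
    (Equiv.ofBijective _ H.2).apply_symm_apply g
  have : (⟨fH H g, g⟩ : M ⋊[φ] G) = (((Equiv.ofBijective _ H.2).symm g : H.1) : M ⋊[φ] G) := by
    apply SemidirectProduct.ext
    · rfl
    · exact hx.symm
  rw [this]
  exact ((Equiv.ofBijective _ H.2).symm g).2

lemma fH_unique (H : SDC M G φ) {m : M} {g : G} (h : (⟨m, g⟩ : M ⋊[φ] G) ∈ H.1) :
    fH H g = m := by
  have := H.2.1 (a₁ := ⟨⟨fH H g, g⟩, fH_spec H g⟩) (a₂ := ⟨⟨m, g⟩, h⟩) rfl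
  exact congrArg (fun x => ((x : H.1) : M ⋊[φ] G).left) this

lemma mem_iff (H : SDC M G φ) (x : M ⋊[φ] G) : x ∈ H.1 ↔ x.left = fH H x.right := by
  constructor
  · intro hx
    exact (fH_unique H (m := x.left) (g := x.right) (by exact hx)).symm
  · intro hx
    have : x = (⟨x.left, x.right⟩ : M ⋊[φ] G) := rfl
    rw [this, hx]
    exact fH_spec H x.right

lemma fH_cocycle (H : SDC M G φ) : IsCocycle φ (fH H) := by
  intro g₁ g₂
  have h := H.1.mul_mem (fH_spec H g₁) (fH_spec H g₂)
  have hl : ((⟨fH H g₁, g₁⟩ : M ⋊[φ] G) * ⟨fH H g₂, g₂⟩) =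
      (⟨fH H g₁ * φ g₁ (fH H g₂), g₁ * g₂⟩ : M ⋊[φ] G) := rfl
  rw [hl] at h
  exact fH_unique H h

lemma fH_mkSDC (f : G → M) (hf : IsCocycle φ f) : fH (mkSDC f hf) = f := by
  funext g
  exact fH_unique (mkSDC f hf) (by show f g = f g; rfl)

lemma sdc_ext {H₁ H₂ : SDC M G φ} (h : fH H₁ = fH H₂) : H₁ = H₂ := by
  apply Subtype.ext
  ext x
  rw [mem_iff, mem_iff, h]

end SDCAux

open SDCAux in
/-- `SDC(G,M)` with the operation
`H₁ + H₂ = {(h₁h₂, g) | (h₁,g) ∈ H₁, (h₂,g) ∈ H₂}` is an abelian group whose identity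
element is the subgroup `{(1,g) | g ∈ G}` (written multiplicatively). -/
theorem sdc_comm_group (M G : Type*) [CommGroup M] [Group G] (φ : G →* MulAut M) :
    ∃ (mul : SDC M G φ → SDC M G φ → SDC M G φ) (one : SDC M G φ) (inv : SDC M G φ → SDC M G φ),
      (∀ H₁ H₂ : SDC M G φ, ((mul H₁ H₂).1 : Set (M ⋊[φ] G)) =
        {x | ∃ h₁ ∈ H₁.1, ∃ h₂ ∈ H₂.1,
          SemidirectProduct.right h₁ = x.right ∧ SemidirectProduct.right h₂ = x.right ∧
          x.left = SemidirectProduct.left h₁ * SemidirectProduct.left h₂}) ∧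
      ((one.1 : Set (M ⋊[φ] G)) = {x | x.left = 1}) ∧
      (∀ a b c, mul (mul a b) c = mul a (mul b c)) ∧
      (∀ a b, mul a b = mul b a) ∧
      (∀ a, mul one a = a) ∧
      (∀ a, mul (inv a) a = one) := by
  classical
  have mulcoc : ∀ H₁ H₂ : SDC M G φ, IsCocycle φ (fun g => fH H₁ g * fH H₂ g) := by
    intro H₁ H₂ g₁ g₂
    simp only [fH_cocycle H₁ g₁ g₂, fH_cocycle H₂ g₁ g₂, map_mul]
    rw [mul_mul_mul_comm]
  have invcoc : ∀ H : SDC M G φ, IsCocycle φ (fun g => (fH H g)⁻¹) := by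
    intro H g₁ g₂
    simp only [fH_cocycle H g₁ g₂, map_inv, mul_inv, mul_comm]
  have onecoc : IsCocycle φ (fun _ : G => (1 : M)) := by
    intro g₁ g₂; simp
  refine ⟨fun H₁ H₂ => mkSDC _ (mulcoc H₁ H₂), mkSDC _ onecoc,
    fun H => mkSDC _ (invcoc H), ?_, ?_, ?_, ?_, ?_, ?_⟩
  · intro H₁ H₂
    ext x
    constructor
    · intro hx
      have hx' : x.left = fH H₁ x.right * fH H₂ x.right := hx
      exact ⟨⟨fH H₁ x.right, x.right⟩, fH_spec H₁ x.right,
        ⟨fH H₂ x.right, x.right⟩, fH_spec H₂ x.right, rfl, rfl, hx'⟩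
    · rintro ⟨h₁, hh₁, h₂, hh₂, hr₁, hr₂, hl⟩
      have e₁ : h₁.left = fH H₁ x.right := by
        rw [← hr₁]; exact (mem_iff H₁ h₁).mp hh₁
      have e₂ : h₂.left = fH H₂ x.right := by
        rw [← hr₂]; exact (mem_iff H₂ h₂).mp hh₂
      show x.left = fH H₁ x.right * fH H₂ x.right
      rw [hl, e₁, e₂]
  · rfl
  · intro a b c
    apply sdc_ext
    rw [fH_mkSDC, fH_mkSDC]
    funext g
    simp only [fH_mkSDC]
    exact mul_assoc _ _ _
  · intro a b
    apply sdc_ext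
    rw [fH_mkSDC, fH_mkSDC]
    funext g
    exact mul_comm _ _
  · intro a
    apply sdc_ext
    rw [fH_mkSDC]
    funext g
    simp only [fH_mkSDC, one_mul]
  · intro a
    apply sdc_ext
    rw [fH_mkSDC, fH_mkSDC]
    funext g
    simp only [fH_mkSDC, inv_mul_cancel]
end

section
/- Let 0 → M →^i E →^p G → 1 be an extension with abelian kernel, N ⊴ G normal, and H ≤ E a partial semi-direct complement of N (i.e. p(H) = N and p|_H : H → N is an isomorphism). Then i(M) ∩ N_E(H) = i(M^N), where N_E(H) is the normalizer of H in E and M^N is the subgroup of elements of M fixed by the conjugation action of N. -/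
/-! Conjugating by `x ∈ i(M) = ker p` does not change images under `p`, so if `x` normalizes `H`,
on which `p` is injective, it centralizes `H`. Since `i(M)` is abelian, centralizing `H` is the
same as centralizing `H ⊔ ker p = p⁻¹(N)`, i.e. being fixed by `N`. -/

namespace Subgroup

variable {E G : Type*} [Group E] [Group G]

theorem centralizer_sup (H K : Subgroup E) :
    centralizer ((H ⊔ K : Subgroup E) : Set E) = centralizer H ⊓ centralizer K := by
  rw [← closure_eq H, ← closure_eq K, ← closure_union, centralizer_closure, closure_eq,
    closure_eq]
  exact SetLike.ext' (Set.centralizer_union (S := (H : Set E)) (T := K))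

theorem mem_centralizer_of_mem_normalizer_of_mem_ker {p : E →* G} {H : Subgroup E}
    (hH : Set.InjOn p H) {x : E} (hx : x ∈ normalizer (H : Set E)) (hker : x ∈ p.ker) :
    x ∈ centralizer (H : Set E) := by
  intro h hh
  have hconj : x * h * x⁻¹ ∈ H := (mem_normalizer_iff.mp hx h).mp hh
  have hfix : x * h * x⁻¹ = h := hH hconj hh (by simp [p.mem_ker.mp hker])
  exact (mul_inv_eq_iff_eq_mul.mp hfix).symm

theorem mem_normalizer_iff_mem_centralizer_comap_map {p : E →* G} [IsMulCommutative p.ker]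
    {H : Subgroup E} (hH : Set.InjOn p H) {x : E} (hker : x ∈ p.ker) :
    x ∈ normalizer (H : Set E) ↔ x ∈ centralizer (comap p (map p H) : Set E) := by
  rw [comap_map_eq, centralizer_sup, mem_inf, and_iff_left (le_centralizer p.ker hker)]
  exact ⟨(mem_centralizer_of_mem_normalizer_of_mem_ker hH · hker), (centralizer_le_normalizer _ ·)⟩

end Subgroup

theorem kernel_meet_normalizer_general (M E G : Type*) [CommGroup M] [Group E] [Group G]
    (i : M →* E) (p : E →* G)
    (hex : i.range = p.ker)
    (N : Subgroup G)
    (H : Subgroup E) (hH1 : Subgroup.map p H = N) (hH2 : Set.InjOn p (H : Set E)) :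
    (Subgroup.normalizer (H : Set E) : Set E) ∩ Set.range i
      = i '' {m : M | ∀ e : E, p e ∈ N → e * i m * e⁻¹ = i m} := by
  have : IsMulCommutative p.ker := hex ▸ inferInstance
  change _ = i '' (i ⁻¹' {x | ∀ e : E, p e ∈ N → e * x * e⁻¹ = x})
  rw [Set.image_preimage_eq_range_inter, Set.inter_comm]
  ext x
  refine and_congr_right fun hx ↦ ?_
  have hker : x ∈ p.ker := hex ▸ (hx : x ∈ i.range)
  rw [SetLike.mem_coe, Subgroup.mem_normalizer_iff_mem_centralizer_comap_map hH2 hker, hH1]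
  simp only [Subgroup.mem_centralizer_iff, SetLike.mem_coe, Subgroup.mem_comap,
    mul_inv_eq_iff_eq_mul, Set.mem_ofPred_eq]

/-- Let `0 → M →ⁱ E →ᵖ G → 1` be an extension with abelian kernel, `N ⊴ G`,
and `H ≤ E` a partial semi-direct complement of `N` (`p(H) = N` and `p` injective on `H`).
Then `i(M) ∩ N_E(H) = i(M^N)`, where `M^N` consists of the elements of `M` fixed by the
conjugation action of `N` (equivalently, fixed by conjugation by any `e ∈ E` with `p e ∈ N`). -/
theorem kernel_meet_normalizer (M E G : Type*) [CommGroup M] [Group E] [Group G]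
    (i : M →* E) (p : E →* G) (hi : Function.Injective i) (hp : Function.Surjective p)
    (hex : i.range = p.ker)
    (N : Subgroup G) (hN : N.Normal)
    (H : Subgroup E) (hH1 : Subgroup.map p H = N) (hH2 : Set.InjOn p (H : Set E)) :
    (Subgroup.normalizer (H : Set E) : Set E) ∩ Set.range i
      = i '' {m : M | ∀ e : E, p e ∈ N → e * i m * e⁻¹ = i m} :=
  kernel_meet_normalizer_general M E G i p hex N H hH1 hH2
end

section
/- Let 0 → M →^i E →^p G → 1 be an extension with abelian kernel, N ⊴ G, and H a partial semi-direct complement of N in E. The restriction p|_{N_E(H)} : N_E(H) → G is surjective if and only if for every e ∈ E there exists m ∈ M with eHe⁻¹ = i(m) H i(m)⁻¹. -/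
/-!
Conjugation by `a` and by `b` carry `H` to the same subgroup exactly when `b⁻¹ * a` normalizes `H`.
Hence `e H e⁻¹ = i(m) H i(m)⁻¹` says that `i(m)⁻¹ * e ∈ N_E(H)`, and since `i(M) = ker p`, such an
`m` exists for every `e` exactly when every fibre of `p` meets `N_E(H)`.
-/

namespace Subgroup

variable {E : Type*} [Group E] {H : Subgroup E}

theorem map_conj_mul (a b : E) (H : Subgroup E) :
    H.map (MulAut.conj (a * b)).toMonoidHom
      = (H.map (MulAut.conj b).toMonoidHom).map (MulAut.conj a).toMonoidHom := by
  rw [map_map, map_mul]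
  rfl

theorem map_conj_eq_map_conj_iff {a b : E} :
    H.map (MulAut.conj a).toMonoidHom = H.map (MulAut.conj b).toMonoidHom ↔
      b⁻¹ * a ∈ normalizer (H : Set E) := by
  rw [← mul_inv_cancel_left b a, map_conj_mul, inv_mul_cancel_left,
    (map_injective (f := (MulAut.conj b).toMonoidHom) (MulAut.conj b).injective).eq_iff]
  exact mem_normalizer_iff_map_conj_eq.symm

theorem exists_map_conj_eq_iff_exists_mem_normalizer (K : Subgroup E) (e : E) :
    (∃ k ∈ K, H.map (MulAut.conj e).toMonoidHom = H.map (MulAut.conj k).toMonoidHom) ↔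
      ∃ x ∈ normalizer (H : Set E), e * x⁻¹ ∈ K := by
  simp_rw [map_conj_eq_map_conj_iff]
  constructor
  · rintro ⟨k, hk, hx⟩
    exact ⟨k⁻¹ * e, hx, by simpa [mul_assoc] using hk⟩
  · rintro ⟨x, hx, hk⟩
    exact ⟨e * x⁻¹, hk, by simpa using hx⟩

end Subgroup

theorem normalizer_surjective_iff_invariant_general (M E G : Type*) [CommGroup M] [Group E] [Group G]
    (i : M →* E) (p : E →* G) (hp : Function.Surjective p)
    (hex : i.range = p.ker)
    (H : Subgroup E) :
    (∀ g : G, ∃ x ∈ Subgroup.normalizer (H : Set E), p x = g) ↔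
      (∀ e : E, ∃ m : M,
        Subgroup.map (MulAut.conj e).toMonoidHom H
          = Subgroup.map (MulAut.conj (i m)).toMonoidHom H) := by
  have h_conj (e : E) :
      (∃ m : M, H.map (MulAut.conj e).toMonoidHom = H.map (MulAut.conj (i m)).toMonoidHom) ↔
        ∃ x ∈ Subgroup.normalizer (H : Set E), e * x⁻¹ ∈ p.ker := by
    rw [← hex, ← Subgroup.exists_map_conj_eq_iff_exists_mem_normalizer]
    simp only [MonoidHom.mem_range, exists_exists_eq_and]
  simp only [hp.forall, h_conj, MonoidHom.mem_ker, map_mul, map_inv, mul_inv_eq_one]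
  simp only [eq_comm]

/-- For an extension `0 → M →ⁱ E →ᵖ G → 1` with abelian kernel, `N ⊴ G`, and a
partial semi-direct complement `H` of `N` in `E`, the restriction `p|_{N_E(H)} : N_E(H) → G`
is surjective iff every `E`-conjugate of `H` is `i(M)`-conjugate to `H`. -/
theorem normalizer_surjective_iff_invariant (M E G : Type*) [CommGroup M] [Group E] [Group G]
    (i : M →* E) (p : E →* G) (hi : Function.Injective i) (hp : Function.Surjective p)
    (hex : i.range = p.ker)
    (N : Subgroup G) (hN : N.Normal)
    (H : Subgroup E) (hH1 : Subgroup.map p H = N) (hH2 : Set.InjOn p (H : Set E)) :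
    (∀ g : G, ∃ x ∈ Subgroup.normalizer (H : Set E), p x = g) ↔
      (∀ e : E, ∃ m : M,
        Subgroup.map (MulAut.conj e).toMonoidHom H
          = Subgroup.map (MulAut.conj (i m)).toMonoidHom H) :=
  normalizer_surjective_iff_invariant_general M E G i p hp hex H
end

section
/- Let 0 → M →^i E →^p G → 1 be an extension with abelian kernel, N ⊴ G with quotient Q = G/N, and H ≤ E a partial semi-direct complement of N such that every E-conjugate of H equals some i(m)Hi(m)⁻¹. Then the sequence 0 → M^N → N_E(H) → G → 1 is exact, H is normal in N_E(H), and the induced sequence 0 → M^N → N_E(H)/H → Q → 1 is exact. -/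
/-!
An element of `ker p = i(M)` that normalizes `H` must centralize it, because `p` is injective on
`H` and `p(x h x⁻¹) = p(h)`. As `i(M)` is abelian and `p⁻¹(N) = i(M)·H`, centralizing `H` is the
same as centralizing `p⁻¹(N)`, so `M^N` is exactly `i⁻¹(N_E(H))`. Surjectivity onto `G` comes
from the hypothesis on conjugates: if `eHe⁻¹ = i(m)Hi(m)⁻¹` then `i(m)⁻¹e` normalizes `H`, and
it has the same image as `e`. The rest is bookkeeping with `ker p = i(M)`.
-/

open Subgroup

theorem Subgroup.map_conj_mul_s7 {E : Type*} [Group E] (H : Subgroup E) (a b : E) :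
    H.map (MulAut.conj (a * b)).toMonoidHom
      = (H.map (MulAut.conj b).toMonoidHom).map (MulAut.conj a).toMonoidHom := by
  rw [map_map, map_mul]; rfl

theorem Subgroup.inv_mul_mem_normalizer_of_map_conj_eq {E : Type*} [Group E] {H : Subgroup E}
    {c e : E} (h : H.map (MulAut.conj e).toMonoidHom = H.map (MulAut.conj c).toMonoidHom) :
    c⁻¹ * e ∈ normalizer (H : Set E) := by
  rw [mem_normalizer_iff_map_conj_eq, ← MulEquiv.toMonoidHom_eq_coe, map_conj_mul_s7, h,
    ← map_conj_mul_s7, inv_mul_cancel, map_one]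
  exact map_id H

section Extension

variable {E G : Type*} [Group E] [Group G] {p : E →* G} {H : Subgroup E}

theorem commute_of_mem_normalizer_of_map_eq_one (hH : Set.InjOn p H) {x : E}
    (hx : x ∈ normalizer (H : Set E)) (hpx : p x = 1) {h : E} (hh : h ∈ H) : Commute x h :=
  mul_inv_eq_iff_eq_mul.mp <| hH ((mem_normalizer_iff.mp hx h).mp hh) hh (by simp [hpx])

variable {M : Type*}

section

variable [Group M] {i : M →* E}

theorem map_eq_one_of_range_eq_ker (hex : i.range = p.ker) (m : M) : p (i m) = 1 :=
  p.mem_ker.mp (hex ▸ ⟨m, rfl⟩)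

theorem exists_eq_mul_of_map_mem_map (hex : i.range = p.ker) {e : E} (he : p e ∈ H.map p) :
    ∃ m, ∃ h ∈ H, e = i m * h := by
  obtain ⟨h, hh, hpe⟩ := he
  obtain ⟨m, hm⟩ : e * h⁻¹ ∈ i.range := hex ▸ p.mem_ker.mpr (by simp [hpe])
  exact ⟨m, h, hh, by simp [hm]⟩

theorem eq_one_of_map_mem (hi : Function.Injective i) (hex : i.range = p.ker)
    (hH : Set.InjOn p H) {m : M} (hm : i m ∈ H) : m = 1 :=
  hi (by simpa using hH hm H.one_mem (by simp [map_eq_one_of_range_eq_ker hex]))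

end

variable [CommGroup M] {i : M →* E}

theorem mem_normalizer_iff_forall_commute_of_map_mem_map (hex : i.range = p.ker)
    (hH : Set.InjOn p H) (m : M) :
    i m ∈ normalizer (H : Set E) ↔ ∀ e, p e ∈ H.map p → Commute (i m) e := by
  constructor
  · intro hm e he
    obtain ⟨m', h, hh, rfl⟩ := exists_eq_mul_of_map_mem_map hex he
    exact ((Commute.all m m').map i).mul_right
      (commute_of_mem_normalizer_of_map_eq_one hH hm (map_eq_one_of_range_eq_ker hex m) hh)
  · intro hm
    refine centralizer_le_normalizer _ (mem_centralizer_iff.mpr fun h hh ↦ ?_)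
    exact (hm h (mem_map_of_mem p hh)).symm

end Extension

theorem seven_term_normalizer_sequence_general (M E G : Type*) [CommGroup M] [Group E] [Group G]
    (i : M →* E) (p : E →* G) (hi : Function.Injective i) (hp : Function.Surjective p)
    (hex : i.range = p.ker)
    (N : Subgroup G)
    (H : Subgroup E) (hH1 : Subgroup.map p H = N) (hH2 : Set.InjOn p (H : Set E))
    (hinv : ∀ e : E, ∃ m : M,
      Subgroup.map (MulAut.conj e).toMonoidHom H
        = Subgroup.map (MulAut.conj (i m)).toMonoidHom H)
    (MN : Set M) (hMN : MN = {m : M | ∀ e : E, p e ∈ N → e * i m * e⁻¹ = i m}) :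
    (∀ m ∈ MN, i m ∈ Subgroup.normalizer (H : Set E)) ∧
    (∀ g : G, ∃ x ∈ Subgroup.normalizer (H : Set E), p x = g) ∧
    (∀ x ∈ Subgroup.normalizer (H : Set E), (p x = 1 ↔ ∃ m ∈ MN, i m = x)) ∧
    (H ≤ Subgroup.normalizer (H : Set E) ∧ ∀ x ∈ Subgroup.normalizer (H : Set E), ∀ h ∈ H, x * h * x⁻¹ ∈ H) ∧
    (∀ x ∈ Subgroup.normalizer (H : Set E), (p x ∈ N ↔ ∃ m ∈ MN, ∃ h ∈ H, x = i m * h)) ∧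
    (∀ m ∈ MN, i m ∈ H → m = 1) := by
  have hpi := map_eq_one_of_range_eq_ker hex
  have mem_MN : ∀ m, m ∈ MN ↔ i m ∈ normalizer (H : Set E) := fun m ↦ by
    simp_rw [mem_normalizer_iff_forall_commute_of_map_mem_map hex hH2, hMN, hH1, Set.mem_ofPred,
      mul_inv_eq_iff_eq_mul, Commute.symm_iff (a := i m)]
    rfl
  refine ⟨fun m ↦ (mem_MN m).mp, fun g ↦ ?_, fun x hx ↦ ⟨fun hpx ↦ ?_, ?_⟩,
    ⟨le_normalizer, fun x hx h ↦ (mem_normalizer_iff.mp hx h).mp⟩, fun x hx ↦ ⟨fun hpx ↦ ?_, ?_⟩,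
    fun m _ ↦ eq_one_of_map_mem hi hex hH2⟩
  · obtain ⟨e, rfl⟩ := hp g
    obtain ⟨m, hm⟩ := hinv e
    exact ⟨(i m)⁻¹ * e, inv_mul_mem_normalizer_of_map_conj_eq hm, by simp [hpi]⟩
  · obtain ⟨m, rfl⟩ : x ∈ i.range := hex ▸ hpx
    exact ⟨m, (mem_MN m).mpr hx, rfl⟩
  · rintro ⟨m, -, rfl⟩
    exact hpi m
  · obtain ⟨m, h, hh, rfl⟩ := exists_eq_mul_of_map_mem_map hex (hH1 ▸ hpx)
    have : i m ∈ normalizer (H : Set E) := by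
      simpa using mul_mem hx (inv_mem (le_normalizer hh))
    exact ⟨m, (mem_MN m).mpr this, h, hh, rfl⟩
  · rintro ⟨m, -, h, hh, rfl⟩
    simpa [hpi, ← hH1] using mem_map_of_mem p hh

/-- Let `0 → M →ⁱ E →ᵖ G → 1` be an extension with abelian kernel, `N ⊴ G`
with quotient `Q = G/N`, and `H ≤ E` a partial semi-direct complement of `N` such that every
`E`-conjugate of `H` is `i(M)`-conjugate to `H`. Then `0 → M^N → N_E(H) → G → 1` is exact,
`H` is normal in `N_E(H)`, and the induced sequence `0 → M^N → N_E(H)/H → Q → 1` is exact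
(expressed here on the level of representatives: the image of `M^N` meets `H` trivially, and
an element of `N_E(H)` maps into `N` iff it lies in `i(M^N)·H`). -/
theorem seven_term_normalizer_sequence (M E G : Type*) [CommGroup M] [Group E] [Group G]
    (i : M →* E) (p : E →* G) (hi : Function.Injective i) (hp : Function.Surjective p)
    (hex : i.range = p.ker)
    (N : Subgroup G) (hN : N.Normal)
    (H : Subgroup E) (hH1 : Subgroup.map p H = N) (hH2 : Set.InjOn p (H : Set E))
    (hinv : ∀ e : E, ∃ m : M,
      Subgroup.map (MulAut.conj e).toMonoidHom H
        = Subgroup.map (MulAut.conj (i m)).toMonoidHom H)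
    (MN : Set M) (hMN : MN = {m : M | ∀ e : E, p e ∈ N → e * i m * e⁻¹ = i m}) :
    (∀ m ∈ MN, i m ∈ Subgroup.normalizer (H : Set E)) ∧
    (∀ g : G, ∃ x ∈ Subgroup.normalizer (H : Set E), p x = g) ∧
    (∀ x ∈ Subgroup.normalizer (H : Set E), (p x = 1 ↔ ∃ m ∈ MN, i m = x)) ∧
    (H ≤ Subgroup.normalizer (H : Set E) ∧ ∀ x ∈ Subgroup.normalizer (H : Set E), ∀ h ∈ H, x * h * x⁻¹ ∈ H) ∧
    (∀ x ∈ Subgroup.normalizer (H : Set E), (p x ∈ N ↔ ∃ m ∈ MN, ∃ h ∈ H, x = i m * h)) ∧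
    (∀ m ∈ MN, i m ∈ H → m = 1) :=
  seven_term_normalizer_sequence_general M E G i p hi hp hex N H hH1 hH2 hinv MN hMN
end

section
/- Let H ∈ SDC(N,M) be a semi-direct complement of N in M ⋊ N ⊆ M ⋊ G whose class is Q-invariant. Then there exists a semi-direct complement H̃ ∈ SDC(G,M) with H̃ ∩ (M ⋊ N) = H if and only if the extension 0 → M^N → N_{M⋊G}(H)/H → Q → 1 splits. -/
/-!
Both conditions say that some subgroup of `M ⋊ G` meets the preimage `P` of `N` exactly in `H`
and maps onto `G/N`. A complement `H̃` of `M` with `H̃ ⊓ P = H` is such a subgroup, and it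
normalizes `H` because `P` is normal. Conversely such a subgroup `K` maps onto `G`, since `H`
already covers `N`, and injectively, since its kernel lies in `K ⊓ P = H`, on which the
projection is injective; so `K` itself is the required complement.
-/

namespace Subgroup

variable {A B : Type*} [Group A] [Group B]

theorem le_normalizer_inf_of_normal (K P : Subgroup A) [P.Normal] :
    K ≤ normalizer ((K ⊓ P : Subgroup A) : Set A) :=
  (le_inf K.le_normalizer le_normalizer_of_normal).trans inf_normalizer_le_normalizer_inf

variable (f : A →* B) {H K : Subgroup A} {N : Subgroup B}

theorem exists_mem_map_eq_of_covers_mod (hHK : H ≤ K) (hH : ∀ n ∈ N, ∃ x ∈ H, f x = n)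
    (hK : ∀ g : B, ∃ x ∈ K, g⁻¹ * f x ∈ N) (g : B) : ∃ x ∈ K, f x = g := by
  obtain ⟨x, hxK, hgx⟩ := hK g
  obtain ⟨h, hhH, hfh⟩ := hH _ hgx
  refine ⟨x * h⁻¹, K.mul_mem hxK (K.inv_mem (hHK hhH)), ?_⟩
  rw [map_mul, map_inv, hfh, mul_inv_rev, inv_inv, mul_inv_cancel_left]

theorem injOn_of_inf_comap_le (hKH : ∀ x ∈ K, f x ∈ N → x ∈ H)
    (hH : ∀ x ∈ H, ∀ y ∈ H, f x = f y → x = y) :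
    ∀ x ∈ K, ∀ y ∈ K, f x = f y → x = y := by
  intro x hx y hy hxy
  have hker : f (x * y⁻¹) = 1 := by rw [map_mul, map_inv, hxy, mul_inv_cancel]
  have hmemH : x * y⁻¹ ∈ H := hKH _ (K.mul_mem hx (K.inv_mem hy)) (hker ▸ N.one_mem)
  exact mul_inv_eq_one.mp (hH _ hmemH 1 H.one_mem (by rw [hker, map_one]))

end Subgroup

theorem extendable_iff_splits_general (M G : Type*) [CommGroup M] [Group G] (φ : G →* MulAut M)
    (N : Subgroup G) (hN : N.Normal)
    (H : Subgroup (M ⋊[φ] G))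
    (hHN : ∀ x ∈ H, SemidirectProduct.right x ∈ N)
    (hsur : ∀ n ∈ N, ∃ x ∈ H, SemidirectProduct.right x = n)
    (hinj : ∀ x ∈ H, ∀ y ∈ H, SemidirectProduct.right x = SemidirectProduct.right y → x = y) :
    (∃ Ht : Subgroup (M ⋊[φ] G),
        (∀ g : G, ∃! x : M ⋊[φ] G, x ∈ Ht ∧ SemidirectProduct.right x = g) ∧
        Ht ⊓ Subgroup.comap (SemidirectProduct.rightHom : M ⋊[φ] G →* G) N = H) ↔
    (∃ K : Subgroup (M ⋊[φ] G),
        K ≤ Subgroup.normalizer (H : Set (M ⋊[φ] G)) ∧ H ≤ K ∧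
        (∀ g : G, ∃ x ∈ K, g⁻¹ * SemidirectProduct.right x ∈ N) ∧
        (∀ x ∈ K, SemidirectProduct.right x ∈ N → x ∈ H)) := by
  constructor
  · rintro ⟨Ht, hcompl, rfl⟩
    refine ⟨Ht, Ht.le_normalizer_inf_of_normal _, inf_le_left, fun g => ?_,
      fun x hx hxN => ⟨hx, hxN⟩⟩
    obtain ⟨x, ⟨hx, rfl⟩, -⟩ := hcompl g
    exact ⟨x, hx, by rw [inv_mul_cancel]; exact N.one_mem⟩
  · rintro ⟨K, -, hHK, hKcover, hKH⟩
    have hsurjK :=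
      Subgroup.exists_mem_map_eq_of_covers_mod SemidirectProduct.rightHom hHK hsur hKcover
    have hinjK := Subgroup.injOn_of_inf_comap_le SemidirectProduct.rightHom hKH hinj
    refine ⟨K, fun g => ?_,
      le_antisymm (fun x hx => hKH x hx.1 hx.2) fun x hx => ⟨hHK hx, hHN x hx⟩⟩
    obtain ⟨x, hx, rfl⟩ := hsurjK g
    exact ⟨x, ⟨hx, rfl⟩, fun y hy => hinjK y hy.1 x hx hy.2⟩

/-- Let `H` be a semi-direct complement of `N` in `M ⋊ N ⊆ M ⋊ G` whose class
is `Q`-invariant (every `(M ⋊ G)`-conjugate of `H` is `M`-conjugate to `H`). Then `H` extends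
to a semi-direct complement `H̃ ∈ SDC(G,M)` with `H̃ ∩ (M ⋊ N) = H` iff the extension
`0 → M^N → N_{M⋊G}(H)/H → Q → 1` splits (expressed via the existence of a subgroup `K` with
`H ≤ K ≤ N_{M⋊G}(H)` mapping onto `Q` with kernel exactly `H`). -/
theorem extendable_iff_splits (M G : Type*) [CommGroup M] [Group G] (φ : G →* MulAut M)
    (N : Subgroup G) (hN : N.Normal)
    (H : Subgroup (M ⋊[φ] G))
    (hHN : ∀ x ∈ H, SemidirectProduct.right x ∈ N)
    (hsur : ∀ n ∈ N, ∃ x ∈ H, SemidirectProduct.right x = n)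
    (hinj : ∀ x ∈ H, ∀ y ∈ H, SemidirectProduct.right x = SemidirectProduct.right y → x = y)
    (hQ : ∀ a : M ⋊[φ] G, ∃ m : M,
      Subgroup.map (MulAut.conj a).toMonoidHom H
        = Subgroup.map (MulAut.conj (SemidirectProduct.inl m)).toMonoidHom H) :
    (∃ Ht : Subgroup (M ⋊[φ] G),
        (∀ g : G, ∃! x : M ⋊[φ] G, x ∈ Ht ∧ SemidirectProduct.right x = g) ∧
        Ht ⊓ Subgroup.comap (SemidirectProduct.rightHom : M ⋊[φ] G →* G) N = H) ↔
    (∃ K : Subgroup (M ⋊[φ] G),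
        K ≤ Subgroup.normalizer (H : Set (M ⋊[φ] G)) ∧ H ≤ K ∧
        (∀ g : G, ∃ x ∈ K, g⁻¹ * SemidirectProduct.right x ∈ N) ∧
        (∀ x ∈ K, SemidirectProduct.right x ∈ N → x ∈ H)) :=
  extendable_iff_splits_general M G φ N hN H hHN hsur hinj
end

section
/- Let 0 → M →^i E →^p G → 1 be a partially split extension (split over N ⊴ G), and let s₀ : N → E be a partial splitting (p ∘ s₀ = id_N). For x ∈ E define d_x : N → M by i(d_x(n)) = x s₀(p(x)⁻¹ n p(x)) x⁻¹ · s₀(n)⁻¹. Then each d_x is a derivation from N to M, and the map x ↦ d_x is a derivation from E to Der(N,M), i.e. d_{xy} = d_x + {}^{p(x)}d_y. -/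
/-- A derivation `d : N → M` on a subgroup `N ≤ G` (multiplicative notation). -/
def IsDer {M G : Type*} [CommGroup M] [Group G] (φ : G →* MulAut M) (N : Subgroup G)
    (d : N → M) : Prop :=
  ∀ n n' : N, d (n * n') = d n * φ (n : G) (d n')

/-- Conjugate of `n ∈ N` by `g⁻¹`: the element `g⁻¹ n g` of the normal subgroup `N`. -/
def conjElt {G : Type*} [Group G] (N : Subgroup G) (hN : N.Normal) (g : G) (n : N) : N :=
  ⟨g⁻¹ * (n : G) * g, by simpa using hN.conj_mem _ n.2 g⁻¹⟩

/-- The conjugation action of `g ∈ G` on maps `N → M`: `(ᵍd)(n) = g · d(g⁻¹ n g)`. -/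
def conjDer {M G : Type*} [CommGroup M] [Group G] (φ : G →* MulAut M) (N : Subgroup G)
    (hN : N.Normal) (g : G) (d : N → M) : N → M :=
  fun n => φ g (d (conjElt N hN g n))

lemma conjElt_mul_arg {G : Type*} [Group G] (N : Subgroup G) (hN : N.Normal) (g : G)
    (n n' : N) : conjElt N hN g (n * n') = conjElt N hN g n * conjElt N hN g n' := by
  apply Subtype.ext; simp only [conjElt, Subgroup.coe_mul, MulMemClass.mk_mul_mk]; group

lemma conjElt_mul {G : Type*} [Group G] (N : Subgroup G) (hN : N.Normal) (g h : G)
    (n : N) : conjElt N hN (g * h) n = conjElt N hN h (conjElt N hN g n) := by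
  apply Subtype.ext; simp only [conjElt]; group

/-- For a partially split extension `0 → M →ⁱ E →ᵖ G → 1` with partial
splitting `s₀ : N → E`, the elements `d_x` defined by
`i(d_x(n)) = x s₀(p(x)⁻¹ n p(x)) x⁻¹ · s₀(n)⁻¹` are derivations `N → M`, and
`x ↦ d_x` is a derivation of `E` into `Der(N,M)`: `d_{xy} = d_x · {}^{p(x)}d_y`. -/
theorem conjugation_derivation (M E G : Type*) [CommGroup M] [Group E] [Group G]
    (i : M →* E) (p : E →* G) (hi : Function.Injective i) (hp : Function.Surjective p)
    (hex : i.range = p.ker)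
    (N : Subgroup G) (hN : N.Normal)
    (φ : G →* MulAut M) (hcomp : ∀ (e : E) (m : M), i (φ (p e) m) = e * i m * e⁻¹)
    (s₀ : N →* E) (hs₀ : ∀ n : N, p (s₀ n) = n) :
    ∃ D : E → N → M,
      (∀ (x : E) (n : N),
        i (D x n) = x * s₀ (conjElt N hN (p x) n) * x⁻¹ * (s₀ n)⁻¹) ∧
      (∀ x : E, IsDer φ N (D x)) ∧
      (∀ (x y : E) (n : N), D (x * y) n = D x n * conjDer φ N hN (p x) (D y) n) := by
  have hmem : ∀ (x : E) (n : N),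
      ∃ m : M, i m = x * s₀ (conjElt N hN (p x) n) * x⁻¹ * (s₀ n)⁻¹ := by
    intro x n
    have : x * s₀ (conjElt N hN (p x) n) * x⁻¹ * (s₀ n)⁻¹ ∈ i.range := by
      rw [hex, MonoidHom.mem_ker]
      simp only [map_mul, map_inv, hs₀]
      show p x * ((p x)⁻¹ * (n : G) * p x) * (p x)⁻¹ * (n : G)⁻¹ = 1
      group
    exact this
  choose D hD using hmem
  refine ⟨D, hD, ?_, ?_⟩
  · intro x n n'
    apply hi
    rw [map_mul, hD]
    have h1 : i (φ ((n : N) : G) (D x n')) = s₀ n * i (D x n') * (s₀ n)⁻¹ := by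
      rw [← hs₀ n]; exact hcomp _ _
    rw [h1, hD, hD, conjElt_mul_arg, map_mul, map_mul]
    group
  · intro x y n
    apply hi
    rw [hD, map_mul p, conjElt_mul, mul_comm (D x n)]
    show _ = i (φ (p x) (D y (conjElt N hN (p x) n)) * D x n)
    rw [map_mul i, hcomp, hD, hD]
    group
end

section
/- Let s₀, s₁ be two partial splittings of a partially split extension 0 → M → E → G → 1 over N with s₁ = d s₀ for a derivation d : N → M (i.e. s₁(n) = i(d(n))s₀(n)). Then the associated maps ρ̃₀, ρ̃₁ : E → Der(N,M) satisfy ρ̃₁(x) − ρ̃₀(x) = {}^{p(x)}d − d for all x ∈ E. Consequently the induced map Q → H¹(N,M) is independent of the choice of partial splitting up to principal derivations, and the class in H¹(Q, H¹(N,M)) is well-defined. -/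
/-- If `s₀, s₁` are partial splittings over `N` with `s₁ = d s₀` for a
derivation `d : N → M`, then the associated maps `ρ̃₀, ρ̃₁ : E → Der(N,M)` satisfy
`ρ̃₁(x) / ρ̃₀(x) = {}^{p(x)}d / d` for all `x ∈ E`; consequently the induced class in
`H¹(Q,H¹(N,M))` is independent of the choice of partial splitting. -/
theorem rho_independent_of_splitting (M E G : Type*) [CommGroup M] [Group E] [Group G]
    (i : M →* E) (p : E →* G) (hi : Function.Injective i) (hp : Function.Surjective p)
    (hex : i.range = p.ker)
    (N : Subgroup G) (hN : N.Normal)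
    (φ : G →* MulAut M) (hcomp : ∀ (e : E) (m : M), i (φ (p e) m) = e * i m * e⁻¹)
    (s₀ s₁ : N →* E) (hs₀ : ∀ n : N, p (s₀ n) = n) (hs₁ : ∀ n : N, p (s₁ n) = n)
    (d : N → M) (hd : IsDer φ N d) (hrel : ∀ n : N, s₁ n = i (d n) * s₀ n)
    (D₀ D₁ : E → N → M)
    (hD₀ : ∀ (x : E) (n : N),
      i (D₀ x n) = x * s₀ (conjElt N hN (p x) n) * x⁻¹ * (s₀ n)⁻¹)
    (hD₁ : ∀ (x : E) (n : N),
      i (D₁ x n) = x * s₁ (conjElt N hN (p x) n) * x⁻¹ * (s₁ n)⁻¹) :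
    ∀ (x : E) (n : N),
      D₁ x n * (D₀ x n)⁻¹ = conjDer φ N hN (p x) d n * (d n)⁻¹ := by
  intro x n
  have key : D₁ x n = φ (p x) (d (conjElt N hN (p x) n)) * D₀ x n * (d n)⁻¹ := by
    apply hi
    rw [map_mul, map_mul, map_inv, hD₀, hD₁, hrel, hrel, hcomp]
    group
  rw [key, conjDer, mul_right_comm, mul_inv_cancel_right]
end

section
/- Let Aut^M(M ⋊ N) be the group of automorphisms of M ⋊ N mapping M to itself. Every such automorphism has the form (m,n) ↦ (σ(m) + d(n), φ(n)) where (σ,φ) ∈ Aut(N,M) and d ∘ φ⁻¹ ∈ Der(N,M), and there is a split exact sequence 0 → Der(N,M) → Aut^M(M ⋊ N) → Aut(N,M) → 1, where the kernel map sends a derivation d to the automorphism (m,n) ↦ (m + d(n), n). -/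
/-- A derivation `d : N → M` (multiplicative notation): `d(nn') = d(n) · n·d(n')`. -/
def IsDerivation {M N : Type*} [CommGroup M] [Group N] (φ : N →* MulAut M) (d : N → M) : Prop :=
  ∀ n n' : N, d (n * n') = d n * φ n (d n')

/-!
An automorphism `F` of `M ⋊ N` with `F(M) = M` restricts to an automorphism `σ` of `M` and induces
an automorphism `ψ` of `N ≅ (M ⋊ N)/M`; writing `F(1, n) = (d n, ψ n)`, the identity
`(m, n) = (m, 1)(1, n)` gives `F(m, n) = (σ m · d n, ψ n)`. Comparing left components of
`F((1, a)(1, b))` shows `d(ab) = d a · ψ(a)·d b`, i.e. `d ∘ ψ⁻¹` is a derivation, and comparing them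
in `F((n·m, 1)(1, n)) = F((1, n)(m, 1))` gives the compatibility `σ(n·m) = ψ(n)·σ(m)`; the second
step is where commutativity of `M` enters.
-/

theorem isDerivation_comp_symm {M N : Type*} [CommGroup M] [Group N] {φ : N →* MulAut M}
    {ψ : MulAut N} {d : N → M} (hd : ∀ a b, d (a * b) = d a * φ (ψ a) (d b)) :
    IsDerivation φ (fun n => d (ψ.symm n)) := by
  intro n n'
  simp only [map_mul, hd, MulEquiv.apply_symm_apply]

namespace SemidirectProduct

variable {M N : Type*} [Group N]

section Group

variable [Group M] {φ : N →* MulAut M} (F : MulAut (M ⋊[φ] N))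

def autRight : N →* N :=
  rightHom.comp (F.toMonoidHom.comp inr)

def autCocycle (n : N) : M :=
  (F (inr n)).left

theorem autCocycle_mul (a b : N) :
    autCocycle F (a * b) = autCocycle F a * φ (autRight F a) (autCocycle F b) := by
  simp only [autCocycle, autRight, map_mul, mul_left]
  rfl

def autLeft (hF : ∀ m : M, (F (inl m)).right = 1) : M →* M where
  toFun m := (F (inl m)).left
  map_one' := by simp
  map_mul' a b := by simp [hF a]

variable {F} (hF : ∀ m : M, (F (inl m)).right = 1)
include hF

theorem map_inl_eq_inl_autLeft (m : M) : F (inl m) = inl (autLeft F hF m) := by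
  ext
  · rfl
  · exact hF m

theorem map_eq_autLeft_autCocycle_autRight (x : M ⋊[φ] N) :
    F x = ⟨autLeft F hF x.left * autCocycle F x.right, autRight F x.right⟩ := by
  conv_lhs => rw [← inl_left_mul_inr_right x, map_mul, map_inl_eq_inl_autLeft hF]
  ext <;> simp [autCocycle, autRight]

theorem autRight_surjective : Function.Surjective (autRight F) := by
  intro n
  refine ⟨(F.symm (inr n)).right, ?_⟩
  have := congrArg right (map_eq_autLeft_autCocycle_autRight hF (F.symm (inr n)))
  simpa using this.symm

variable (hF' : ∀ m : M, ∃ m' : M, F (inl m') = inl m)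
include hF'

theorem autLeft_bijective : Function.Bijective (autLeft F hF) := by
  refine ⟨fun a b hab => inl_injective (F.injective ?_), fun m => ?_⟩
  · rw [map_inl_eq_inl_autLeft hF, map_inl_eq_inl_autLeft hF, hab]
  · obtain ⟨m', hm'⟩ := hF' m
    exact ⟨m', congrArg left hm'⟩

theorem autRight_bijective : Function.Bijective (autRight F) := by
  refine ⟨(injective_iff_map_eq_one _).mpr fun n hn => ?_, autRight_surjective hF⟩
  obtain ⟨m', hm'⟩ := hF' (autCocycle F n)
  have hinr : F (inr n) = F (inl m') := by
    rw [hm']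
    ext
    · rfl
    · exact hn
  simpa using congrArg right (F.injective hinr)

end Group

variable [CommGroup M] {φ : N →* MulAut M}

theorem autLeft_compatible {F : MulAut (M ⋊[φ] N)} (hF : ∀ m : M, (F (inl m)).right = 1)
    (n : N) (m : M) : autLeft F hF (φ n m) = φ (autRight F n) (autLeft F hF m) := by
  have hcomm : (inl (φ n m) * inr n : M ⋊[φ] N) = inr n * inl m := by
    ext <;> simp
  have := congrArg left (congrArg F hcomm)
  simp only [map_mul, map_inl_eq_inl_autLeft hF, mul_left, left_inl, right_inl, map_one,
    MulAut.one_apply] at this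
  exact mul_right_cancel (this.trans (mul_comm _ _))

def mulAutOfDerivation {d : N → M} (hd : IsDerivation φ d) : MulAut (M ⋊[φ] N) where
  toFun x := ⟨x.left * d x.right, x.right⟩
  invFun x := ⟨x.left * (d x.right)⁻¹, x.right⟩
  left_inv x := by ext <;> simp
  right_inv x := by ext <;> simp
  map_mul' a b := by
    ext
    · simp only [mul_left, mul_right, hd a.right b.right, map_mul]
      exact mul_mul_mul_comm _ _ _ _
    · rfl

end SemidirectProduct

open SemidirectProduct in
/-- Every automorphism of `M ⋊ N` mapping `M` onto itself has the form
`(m,n) ↦ (σ(m) · d(n), ψ(n))` with `(σ,ψ) ∈ Aut(N,M)` a compatible pair and `d ∘ ψ⁻¹` a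
derivation; and there is a split exact sequence
`0 → Der(N,M) → Aut^M(M ⋊ N) → Aut(N,M) → 1`, the kernel map sending a derivation `d` to
`(m,n) ↦ (m · d(n), n)`. -/
theorem autM_structure (M N : Type*) [CommGroup M] [Group N] (φ : N →* MulAut M) :
    (∀ F : MulAut (M ⋊[φ] N),
      (∀ m : M, (F (SemidirectProduct.inl m)).right = 1) →
      (∀ m : M, ∃ m' : M, F (SemidirectProduct.inl m') = SemidirectProduct.inl m) →
      ∃ (σ : MulAut M) (ψ : MulAut N) (d : N → M),
        (∀ (n : N) (m : M), σ (φ n m) = φ (ψ n) (σ m)) ∧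
        IsDerivation φ (fun n => d (ψ.symm n)) ∧
        (∀ x : M ⋊[φ] N, F x = ⟨σ x.left * d x.right, ψ x.right⟩)) ∧
    (∀ d : N → M, IsDerivation φ d →
      ∃ F : MulAut (M ⋊[φ] N), ∀ x : M ⋊[φ] N, F x = ⟨x.left * d x.right, x.right⟩) ∧
    (∀ (σ : MulAut M) (ψ : MulAut N), (∀ (n : N) (m : M), σ (φ n m) = φ (ψ n) (σ m)) →
      ∃ F : MulAut (M ⋊[φ] N), ∀ x : M ⋊[φ] N, F x = ⟨σ x.left, ψ x.right⟩) ∧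
    (∀ F : MulAut (M ⋊[φ] N),
      (∀ x : M ⋊[φ] N, (F x).right = x.right) →
      (∀ m : M, F (SemidirectProduct.inl m) = SemidirectProduct.inl m) →
      ∃ d : N → M, IsDerivation φ d ∧
        ∀ x : M ⋊[φ] N, F x = ⟨x.left * d x.right, x.right⟩) := by
  refine ⟨fun F hF hF' => ?_, fun d hd => ⟨mulAutOfDerivation hd, fun _ => rfl⟩,
    fun σ ψ h => ⟨congr σ ψ fun n => MulEquiv.ext (h n), fun _ => rfl⟩, fun F hright hinl => ?_⟩
  · exact ⟨.ofBijective _ (autLeft_bijective hF hF'), .ofBijective _ (autRight_bijective hF hF'),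
      autCocycle F, autLeft_compatible hF, isDerivation_comp_symm (autCocycle_mul F),
      map_eq_autLeft_autCocycle_autRight hF⟩
  · have hF : ∀ m : M, (F (inl m)).right = 1 := fun m => hright (inl m)
    have hψ (n : N) : autRight F n = n := hright (inr n)
    have hσ (m : M) : autLeft F hF m = m := congrArg left (hinl m)
    refine ⟨autCocycle F, fun a b => by simpa [hψ] using autCocycle_mul F a b, fun x => ?_⟩
    simpa [hψ, hσ] using map_eq_autLeft_autCocycle_autRight hF x
end

section
/- Let f : G × G → M be a 2-cocycle with f restricted to N × N identically zero, and let E = M ×_f G be the associated extension with partial splitting s₀(n) = (0,n). Then for (m,g) ∈ E the derivation d_{(m,g)} associated to the conjugate splitting ^{(m,g)}s₀ is given by d_{(m,g)}(n) = m − n·m + f(g, g⁻¹ng) − f(n,g) for all n ∈ N. -/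
/-- The multiplication of the extension `M ×_f G` associated to a 2-cocycle `f`:
`(m,g)(m',g') = (m · g·m' · f(g,g'), gg')`. -/
def cocycleMul {M G : Type*} [CommGroup M] [Group G] (φ : G →* MulAut M) (f : G → G → M)
    (x y : M × G) : M × G :=
  (x.1 * φ x.2 y.1 * f x.2 y.2, x.2 * y.2)

/-- Let `f : G × G → M` be a normalized 2-cocycle vanishing on `N × N`, and
`E = M ×_f G` the associated extension with partial splitting `s₀(n) = (1,n)`. Then for
`x = (m,g) ∈ E`, the derivation `d_{(m,g)}` associated to the conjugate splitting
`^{(m,g)}s₀`, i.e. defined by `x s₀(g⁻¹ n g) x⁻¹ = (d_{(m,g)}(n), n)`, is given by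
`d_{(m,g)}(n) = m · (n·m)⁻¹ · f(g, g⁻¹ng) · f(n,g)⁻¹` for `n ∈ N`. -/
theorem rho_cocycle_description (M G : Type*) [CommGroup M] [Group G] (φ : G →* MulAut M)
    (N : Subgroup G) (hN : N.Normal) (f : G → G → M)
    (hcoc : ∀ g g' g'' : G, φ g (f g' g'') * f g (g' * g'') = f g g' * f (g * g') g'')
    (hnorm₁ : ∀ g : G, f 1 g = 1) (hnorm₂ : ∀ g : G, f g 1 = 1)
    (hvan : ∀ n n' : G, n ∈ N → n' ∈ N → f n n' = 1) :
    ∀ (m : M) (g n : G), n ∈ N → ∀ xinv : M × G,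
      cocycleMul φ f (m, g) xinv = (1, 1) →
      cocycleMul φ f (cocycleMul φ f (m, g) (1, g⁻¹ * n * g)) xinv
        = (m * (φ n m)⁻¹ * f g (g⁻¹ * n * g) * (f n g)⁻¹, n) := by
  intro m g n hn xinv hx
  obtain ⟨a, b⟩ := xinv
  simp only [cocycleMul, Prod.mk.injEq] at hx ⊢
  obtain ⟨h1, h2⟩ := hx
  have hb : b = g⁻¹ := eq_inv_of_mul_eq_one_right h2
  subst hb
  have ha : φ g a = (m * f g g⁻¹)⁻¹ := by
    have : m * f g g⁻¹ * φ g a = 1 := by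
      rw [mul_comm (m * f g g⁻¹)]; rw [← mul_assoc]
      calc φ g a * m * f g g⁻¹ = m * φ g a * f g g⁻¹ := by rw [mul_comm (φ g a) m]
        _ = 1 := h1
    exact (inv_eq_of_mul_eq_one_right this).symm
  have hkey : φ n (f g g⁻¹) = f n g * f (n * g) g⁻¹ := by
    have := hcoc n g g⁻¹
    rwa [mul_inv_cancel, hnorm₂, mul_one] at this
  constructor
  · have hng : g * (g⁻¹ * n * g) = n * g := by group
    rw [hng]
    have : φ (n * g) a = (φ n m)⁻¹ * (φ n (f g g⁻¹))⁻¹ := by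
      rw [map_mul φ]
      show φ n (φ g a) = _
      rw [ha, mul_inv, map_mul, map_inv, map_inv]
    rw [this, hkey, map_one, mul_one]
    simp [mul_inv, mul_assoc, mul_left_comm, mul_comm, inv_mul_cancel_left,
      mul_inv_cancel_left]
    rw [mul_left_comm, mul_inv_cancel_left]
  · group
end

section
/- Let 1 → N → G →^π Q → 1 be an extension, M a G-module with M^N = M (N-invariant), and d : N → M a G-equivariant homomorphism (so [d] ∈ H¹(N,M)^Q). Fix a set-theoretic section α : Q → G with factor set f_α(q₁,q₂) = α(q₁)α(q₂)α(q₁q₂)⁻¹ ∈ N. Then the function F : Q × Q → M defined by F(q₁,q₂) = −d(f_α(q₁,q₂)) is a 2-cocycle of Q with values in M. -/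
/-!
Conjugating the factor set `f(q₂,q₃)` by `α q₁` and multiplying by `f(q₁,q₂q₃)` gives, after
cancellation in `G`, the same element `α q₁ α q₂ α q₃ α(q₁q₂q₃)⁻¹` as `f(q₁,q₂) f(q₁q₂,q₃)`.
Applying the equivariant homomorphism `d` to this identity in `N` and inverting in the
commutative group `M` yields the cocycle identity.
-/

section FactorSet

variable {Q G : Type*} [Group G]

def factorSet [Mul Q] (α : Q → G) (q₁ q₂ : Q) : G :=
  α q₁ * α q₂ * (α (q₁ * q₂))⁻¹

theorem factorSet_mem_ker [Group Q] (π : G →* Q) {α : Q → G} (hα : ∀ q, π (α q) = q)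
    (q₁ q₂ : Q) : factorSet α q₁ q₂ ∈ π.ker := by
  simp [factorSet, hα]

theorem conj_factorSet_mul_factorSet [Semigroup Q] (α : Q → G) (q₁ q₂ q₃ : Q) :
    α q₁ * factorSet α q₂ q₃ * (α q₁)⁻¹ * factorSet α q₁ (q₂ * q₃) =
      factorSet α q₁ q₂ * factorSet α (q₁ * q₂) q₃ := by
  simp only [factorSet, mul_assoc]
  group

end FactorSet

/-- Let `1 → N → G → Q → 1` be an extension, `M` a `G`-module on which `N`
acts trivially, and `d : N → M` a `G`-equivariant homomorphism. For a set-theoretic section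
`α : Q → G` with factor set `f_α(q₁,q₂) = α(q₁)α(q₂)α(q₁q₂)⁻¹ ∈ N`, the function
`F(q₁,q₂) = d(f_α(q₁,q₂))⁻¹` is a 2-cocycle of `Q` with values in `M`
(multiplicative notation). -/
theorem tr_cocycle (M G : Type*) [CommGroup M] [Group G] (φ : G →* MulAut M)
    (N : Subgroup G) [hN : N.Normal]
    (d : N → M) (hhom : ∀ n n' : N, d (n * n') = d n * d n')
    (hequiv : ∀ (g : G) (n : N), d ⟨g * (n : G) * g⁻¹, hN.conj_mem _ n.2 g⟩ = φ g (d n))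
    (α : G ⧸ N → G) (hα : ∀ q : G ⧸ N, (QuotientGroup.mk (α q) : G ⧸ N) = q) :
    ∃ F : G ⧸ N → G ⧸ N → M,
      (∀ q₁ q₂ : G ⧸ N, F q₁ q₂ =
        (d ⟨α q₁ * α q₂ * (α (q₁ * q₂))⁻¹, by
          rw [← QuotientGroup.eq_one_iff]
          simp [hα]⟩)⁻¹) ∧
      (∀ q₁ q₂ q₃ : G ⧸ N,
        φ (α q₁) (F q₂ q₃) * F q₁ (q₂ * q₃) = F (q₁ * q₂) q₃ * F q₁ q₂) := by
  let f (q₁ q₂ : G ⧸ N) : N :=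
    ⟨factorSet α q₁ q₂, by simpa using factorSet_mem_ker (QuotientGroup.mk' N) hα q₁ q₂⟩
  refine ⟨fun q₁ q₂ => (d (f q₁ q₂))⁻¹, fun _ _ => rfl, fun q₁ q₂ q₃ => ?_⟩
  have hd : φ (α q₁) (d (f q₂ q₃)) * d (f q₁ (q₂ * q₃)) = d (f q₁ q₂) * d (f (q₁ * q₂) q₃) := by
    rw [← hequiv, ← hhom, ← hhom]
    exact congrArg d (Subtype.ext (conj_factorSet_mul_factorSet α q₁ q₂ q₃))
  rw [map_inv, ← mul_inv, hd, mul_inv, mul_comm]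
end

section
/- Let N ⊴ G with G-module M, and let d : N → M be a derivation whose class in H¹(N,M) is fixed by the conjugation action of all of G up to inner derivations. Let H = {(d(n), n) | n ∈ N} ⊆ M ⋊ G. Then (m,g) ∈ N_{M⋊G}(H) if and only if (ᵍd − d)(n) = n·m − m for all n ∈ N. -/
/-! Conjugating `(d(g⁻¹ng), g⁻¹ng)` by `(m, g)` in `M ⋊ G` gives `(m · (ᵍd)(n) · (n·m)⁻¹, n)`.
Since `H` is the graph of `d` over `N`, this lies in `H` exactly when its first coordinate is
`d(n)`, which is the stated identity. As `n ↦ g⁻¹ng` is a bijection of `N`, these conjugates are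
all of `(m, g) H (m, g)⁻¹`, and when they all lie in `H` they are exactly its elements. -/

theorem SemidirectProduct.mk_mul_mk_mul_inv {N G : Type*} [Group N] [Group G]
    {φ : G →* MulAut N} (m a : N) (g k : G) :
    (⟨m, g⟩ : N ⋊[φ] G) * ⟨a, k⟩ * (⟨m, g⟩ : N ⋊[φ] G)⁻¹ =
      ⟨m * φ g a * (φ (g * k * g⁻¹) m)⁻¹, g * k * g⁻¹⟩ := by
  ext
  · change m * φ g a * φ (g * k) (φ g⁻¹ m⁻¹) = _
    rw [← MulAut.mul_apply, ← map_mul, map_inv]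
  · rfl

theorem mul_mul_inv_eq_iff_mul_inv_eq {M : Type*} [CommGroup M] (a b c e : M) :
    a * c * b⁻¹ = e ↔ c * e⁻¹ = b * a⁻¹ := by
  simp only [← div_eq_mul_inv]
  rw [div_eq_iff_eq_mul, div_eq_div_iff_mul_eq_mul, mul_comm c, mul_comm b]

section
variable {G : Type*} [Group G] {N : Subgroup G} (hN : N.Normal)

theorem coe_conjElt (g : G) (n : N) : (conjElt N hN g n : G) = g⁻¹ * n * g := rfl

theorem conjElt_surjective (g : G) : Function.Surjective (conjElt N hN g) :=
  fun n => ⟨conjElt N hN g⁻¹ n, Subtype.ext <| by simp [coe_conjElt, mul_assoc]⟩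

end

section
variable {M G : Type*} [CommGroup M] [Group G] {φ : G →* MulAut M} {N : Subgroup G}
  (hN : N.Normal) (d : N → M)

theorem mk_mul_mk_conjElt_mul_inv (m : M) (g : G) (n : N) :
    (⟨m, g⟩ : M ⋊[φ] G) * ⟨d (conjElt N hN g n), conjElt N hN g n⟩ * (⟨m, g⟩ : M ⋊[φ] G)⁻¹ =
      ⟨m * conjDer φ N hN g d n * (φ n m)⁻¹, n⟩ := by
  have hn : g * (conjElt N hN g n : G) * g⁻¹ = n := by simp [coe_conjElt, mul_assoc]
  rw [SemidirectProduct.mk_mul_mk_mul_inv, hn]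
  rfl

theorem mk_mem_iff_of_coe_eq {H : Subgroup (M ⋊[φ] G)}
    (hH : (H : Set (M ⋊[φ] G)) = {x | ∃ n : N, x = ⟨d n, (n : G)⟩}) (a : M) (n : N) :
    (⟨a, n⟩ : M ⋊[φ] G) ∈ H ↔ a = d n := by
  rw [← SetLike.mem_coe, hH]
  constructor
  · rintro ⟨n', h⟩
    obtain rfl : n = n' := Subtype.ext (congrArg SemidirectProduct.right h)
    exact congrArg SemidirectProduct.left h
  · rintro rfl
    exact ⟨n, rfl⟩

end

/-- For a derivation `d : N → M` whose class is fixed by the conjugation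
action of `G` up to inner derivations, and `H = {(d(n), n) | n ∈ N} ⊆ M ⋊ G`, an element
`(m,g)` lies in the normalizer of `H` iff `(ᵍd / d)(n) = (n·m) m⁻¹` for all `n ∈ N`. -/
theorem mem_normalizer_iff (M G : Type*) [CommGroup M] [Group G] (φ : G →* MulAut M)
    (N : Subgroup G) (hN : N.Normal)
    (d : N → M)
    (H : Subgroup (M ⋊[φ] G))
    (hH : (H : Set (M ⋊[φ] G)) = {x | ∃ n : N, x = ⟨d n, (n : G)⟩}) :
    ∀ (m : M) (g : G),
      (⟨m, g⟩ : M ⋊[φ] G) ∈ Subgroup.normalizer (H : Set (M ⋊[φ] G)) ↔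
        ∀ n : N, conjDer φ N hN g d n * (d n)⁻¹ = φ (n : G) m * m⁻¹ := by
  intro m g
  have hmem (n : N) : (⟨d n, n⟩ : M ⋊[φ] G) ∈ H := (mk_mem_iff_of_coe_eq d hH _ n).2 rfl
  have hconj (n : N) : (⟨m, g⟩ : M ⋊[φ] G) * ⟨d (conjElt N hN g n), conjElt N hN g n⟩ *
      (⟨m, g⟩ : M ⋊[φ] G)⁻¹ = ⟨d n, n⟩ ↔ conjDer φ N hN g d n * (d n)⁻¹ = φ (n : G) m * m⁻¹ := by
    rw [mk_mul_mk_conjElt_mul_inv, SemidirectProduct.ext_iff, and_iff_left rfl,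
      mul_mul_inv_eq_iff_mul_inv_eq]
  rw [Subgroup.mem_normalizer_iff]
  constructor
  · intro hx n
    have h := (hx _).1 (hmem (conjElt N hN g n))
    rwa [mk_mul_mk_conjElt_mul_inv, mk_mem_iff_of_coe_eq d hH, mul_mul_inv_eq_iff_mul_inv_eq] at h
  · intro hE h
    constructor
    · intro hh
      obtain ⟨k, rfl⟩ : ∃ k, h = _ := (Set.ext_iff.1 hH h).1 hh
      obtain ⟨n, rfl⟩ := conjElt_surjective hN g k
      exact (hconj n).2 (hE n) ▸ hmem n
    · intro hh
      obtain ⟨n, hn⟩ : ∃ n : N, _ = _ := (Set.ext_iff.1 hH _).1 hh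
      rw [← (hconj n).2 (hE n), mul_left_inj, mul_right_inj] at hn
      exact hn ▸ hmem _
end
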